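/- arXiv:2603.07692 — 4 statements merged into one kernel-verified Lean document; each statement's English description precedes it below -/
import Mathlib

section
/- Let β₁ ≤ β₂ ≤ ⋯ ≤ β_p be real numbers, δ_i > 0, σ > 0. Define R₁ = 1/σ² and, for 2 ≤ i ≤ p, R_i = 1/σ² + Σ_{j=1}^{i-1} (β_j/δ_j²)(β_j − β_i). Then there exists s ≤ p such that R₁ ≤ R₂ ≤ ⋯ ≤ R_s and R_s ≥ R_{s+1} ≥ ⋯ ≥ R_p; i.e., the sequence {R_i} is unimodal (increasing then decreasing). -/
open Matrix

theorem stmt3 {p : ℕ} (hp : 0 < p) (β δ : Fin p → ℝ) (σ : ℝ)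
    (hβ : Monotone β) (hδ : ∀ i, 0 < δ i) (hσ : 0 < σ) :
    let R : Fin p → ℝ := fun i =>
      1 / σ ^ 2 + ∑ j ∈ Finset.Iio i, (β j / (δ j) ^ 2) * (β j - β i)
    ∃ s : Fin p,
      (∀ i j : Fin p, i ≤ j → j ≤ s → R i ≤ R j) ∧
      (∀ i j : Fin p, s ≤ i → i ≤ j → R j ≤ R i) := by
  intro R
  obtain ⟨N, rfl⟩ : ∃ N, p = N + 1 := ⟨p - 1, by omega⟩
  set a : Fin (N + 1) → ℝ := fun j => β j / (δ j) ^ 2 with ha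
  set S : Fin (N + 1) → ℝ := fun i => ∑ j ∈ Finset.Iic i, a j with hS
  -- step formula
  have hstep : ∀ n (hn : n < N),
      R ⟨n + 1, by omega⟩ - R ⟨n, by omega⟩
        = (β ⟨n, by omega⟩ - β ⟨n + 1, by omega⟩) * S ⟨n, by omega⟩ := by
    intro n hn
    set i : Fin (N + 1) := ⟨n, by omega⟩ with hi
    set i' : Fin (N + 1) := ⟨n + 1, by omega⟩ with hi'
    have hIio : Finset.Iio i' = insert i (Finset.Iio i) := by
      rw [Finset.Iio_insert]
      ext j
      simp [Fin.lt_def, Fin.le_def, hi, hi', Nat.lt_succ_iff]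
    have hmem : i ∉ Finset.Iio i := by simp
    have hSi : S i = a i + ∑ j ∈ Finset.Iio i, a j := by
      rw [hS]
      simp only
      rw [← Finset.Iio_insert, Finset.sum_insert hmem]
    have key : (∑ j ∈ Finset.Iio i, a j * (β j - β i'))
        - (∑ j ∈ Finset.Iio i, a j * (β j - β i))
        = (∑ j ∈ Finset.Iio i, a j) * (β i - β i') := by
      rw [← Finset.sum_sub_distrib, Finset.sum_mul]
      apply Finset.sum_congr rfl
      intros; ring
    simp only [R, hIio, Finset.sum_insert hmem, hSi, ← ha]
    linear_combination key
  -- positivity of S propagates upward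
  have hSmono : ∀ (m k : Fin (N + 1)), m ≤ k → 0 < S m → 0 < S k := by
    intro m k hmk hm
    obtain ⟨j, hjm, hj⟩ : ∃ j ∈ Finset.Iic m, 0 < a j := by
      by_contra h
      push_neg at h
      have : S m ≤ 0 := Finset.sum_nonpos h
      linarith
    have hβj : 0 < β j := by
      by_contra h
      push_neg at h
      have : a j ≤ 0 := div_nonpos_of_nonpos_of_nonneg h (by positivity)
      linarith
    have hub : Finset.Iic m ⊆ Finset.Iic k := Finset.Iic_subset_Iic.2 hmk
    have hdisj : Disjoint (Finset.Iic m) (Finset.Ioc m k) := by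
      simp [Finset.disjoint_left]
      intro x hx hmx
      exact absurd hmx (not_lt.2 hx)
    have hunion : Finset.Iic m ∪ Finset.Ioc m k = Finset.Iic k := by
      ext x
      simp
      constructor
      · rintro (h | ⟨_, h⟩) <;> [exact le_trans h hmk; exact h]
      · intro h
        rcases le_or_gt x m with h' | h'
        · exact Or.inl h'
        · exact Or.inr ⟨h', h⟩
    have hSk : S k = S m + ∑ l ∈ Finset.Ioc m k, a l := by
      rw [hS]
      simp only
      rw [← hunion, Finset.sum_union hdisj]
    have hpos : 0 ≤ ∑ l ∈ Finset.Ioc m k, a l := by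
      apply Finset.sum_nonneg
      intro l hl
      simp at hl
      have : β j ≤ β l := hβ (le_of_lt (lt_of_le_of_lt (Finset.mem_Iic.1 hjm) hl.1))
      have : 0 < β l := lt_of_lt_of_le hβj this
      exact div_nonneg this.le (by positivity)
    linarith [hSk, hpos]
  -- extend R to ℕ by clamping
  set r : ℕ → ℝ := fun n => R ⟨min n N, by omega⟩ with hr
  have hr_eq : ∀ (i : Fin (N + 1)), r i.val = R i := by
    intro i
    simp only [hr]
    congr 1
    exact Fin.ext (by simp; omega)
  -- key unimodality driver
  have hkey : ∀ n, r (n + 1) < r n → ∀ k, n ≤ k → r (k + 1) ≤ r k := by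
    intro n hn k hk
    have hnN : n < N := by
      by_contra h
      push_neg at h
      have h1 : min (n + 1) N = min n N := by omega
      rw [hr] at hn
      simp only [h1] at hn
      exact absurd hn (lt_irrefl _)
    have h1 : r (n + 1) = R ⟨n + 1, by omega⟩ := by
      simp only [hr]; congr 1; exact Fin.ext (by simp; omega)
    have h2 : r n = R ⟨n, by omega⟩ := by
      simp only [hr]; congr 1; exact Fin.ext (by simp; omega)
    have hd := hstep n hnN
    have hble : β (⟨n, by omega⟩ : Fin (N + 1)) ≤ β ⟨n + 1, by omega⟩ :=
      hβ (by simp [Fin.le_def])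
    have hSn : 0 < S ⟨n, by omega⟩ := by
      rcases lt_or_ge 0 (S ⟨n, by omega⟩) with h | h
      · exact h
      · exfalso
        rw [h1, h2] at hn
        nlinarith
    rcases lt_or_ge k N with hkN | hkN
    · have hdk := hstep k hkN
      have hSk : 0 < S ⟨k, by omega⟩ :=
        hSmono ⟨n, by omega⟩ ⟨k, by omega⟩ (by simp [Fin.le_def]; omega) hSn
      have hbk : β (⟨k, by omega⟩ : Fin (N + 1)) ≤ β ⟨k + 1, by omega⟩ :=
        hβ (by simp [Fin.le_def])
      have h3 : r (k + 1) = R ⟨k + 1, by omega⟩ := by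
        simp only [hr]; congr 1; exact Fin.ext (by simp; omega)
      have h4 : r k = R ⟨k, by omega⟩ := by
        simp only [hr]; congr 1; exact Fin.ext (by simp; omega)
      rw [h3, h4]
      nlinarith
    · have h1' : min (k + 1) N = min k N := by omega
      rw [hr]
      simp only [h1']
      exact le_refl _
  -- define the peak
  set T : Set ℕ := {n | ∀ k, n ≤ k → r (k + 1) ≤ r k} with hT
  have hTN : N ∈ T := by
    intro k hk
    have h1' : min (k + 1) N = min k N := by omega
    rw [hr]
    simp only [h1']
    exact le_refl _
  have hTne : T.Nonempty := ⟨N, hTN⟩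
  set s := sInf T with hs
  have hsT : s ∈ T := Nat.sInf_mem hTne
  have hsN : s ≤ N := Nat.sInf_le hTN
  have hinc : ∀ n, n < s → r n ≤ r (n + 1) := by
    intro n hns
    by_contra h
    push_neg at h
    have : n ∈ T := hkey n h
    exact absurd (Nat.sInf_le this) (by omega)
  have hmono1 : ∀ i j, i ≤ j → j ≤ s → r i ≤ r j := by
    intro i j hij hjs
    induction j with
    | zero => exact le_of_eq (by rw [Nat.le_zero.1 hij])
    | succ m ih =>
      rcases Nat.eq_or_lt_of_le hij with h | h
      · rw [h]
      · exact le_trans (ih (by omega) (by omega)) (hinc m (by omega))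
  have hmono2 : ∀ i j, s ≤ i → i ≤ j → r j ≤ r i := by
    intro i j hsi hij
    induction j with
    | zero => simp_all
    | succ m ih =>
      rcases Nat.eq_or_lt_of_le hij with h | h
      · rw [h]
      · exact le_trans (hsT m (by omega)) (ih (by omega))
  refine ⟨⟨s, by omega⟩, ?_, ?_⟩
  · intro i j hij hjs
    rw [← hr_eq i, ← hr_eq j]
    exact hmono1 i.val j.val hij hjs
  · intro i j hsi hij
    rw [← hr_eq i, ← hr_eq j]
    exact hmono2 i.val j.val hsi hij
end

section
/- Under a one-factor model Σ = σ²ββᵀ + Δ with nondecreasing β and Σ_j β_j/δ_j² > 0, let w be the long-only minimum variance portfolio, K = {i : w_i > 0}, B_K = 1/σ² + Σ_{j∈K} β_j²/δ_j², C_K = Σ_{j∈K} β_j/δ_j². Then for every index i: w_i > 0 if and only if β_i C_K < B_K. -/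
open Matrix

set_option maxHeartbeats 1000000 in
theorem stmt7 {p : ℕ} (β δ : Fin p → ℝ) (σ : ℝ)
    (hβ : Monotone β) (hδ : ∀ i, 0 < δ i) (hσ : 0 < σ)
    (hsum : 0 < ∑ j, β j / (δ j) ^ 2)
    (S : Matrix (Fin p) (Fin p) ℝ)
    (hSdef : S = σ ^ 2 • (Matrix.of fun i j => β i * β j)
      + Matrix.diagonal (fun i => (δ i) ^ 2))
    (w : Fin p → ℝ) (hwsum : ∑ i, w i = 1) (hnn : ∀ i, 0 ≤ w i)
    (hmin : ∀ v : Fin p → ℝ, (∑ i, v i = 1) → (∀ i, 0 ≤ v i) →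
      w ⬝ᵥ S *ᵥ w ≤ v ⬝ᵥ S *ᵥ v) :
    let K : Finset (Fin p) := Finset.univ.filter (fun i => 0 < w i)
    let BK : ℝ := 1 / σ ^ 2 + ∑ j ∈ K, (β j) ^ 2 / (δ j) ^ 2
    let CK : ℝ := ∑ j ∈ K, β j / (δ j) ^ 2
    ∀ i : Fin p, 0 < w i ↔ β i * CK < BK := by
  intro K BK CK
  have hKdef : K = Finset.univ.filter (fun i => 0 < w i) := rfl
  have hσ2 : (0:ℝ) < σ ^ 2 := by positivity
  have hδ2 : ∀ i, (0:ℝ) < δ i ^ 2 := fun i => by have := hδ i; positivity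
  -- the quadratic form
  have hF : ∀ v : Fin p → ℝ, v ⬝ᵥ S *ᵥ v
      = σ ^ 2 * (∑ k, β k * v k) ^ 2 + ∑ k, δ k ^ 2 * v k ^ 2 := by
    intro v
    have h1 : ∀ i, (S *ᵥ v) i = σ ^ 2 * β i * (∑ k, β k * v k) + δ i ^ 2 * v i := by
      intro i
      simp only [hSdef, Matrix.mulVec, dotProduct, Matrix.add_apply,
        Matrix.smul_apply, Matrix.of_apply, Matrix.diagonal_apply, smul_eq_mul,
        add_mul, ite_mul, zero_mul, Finset.sum_add_distrib, Finset.sum_ite_eq,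
        Finset.mem_univ, if_true, Finset.mul_sum]
      congr 1
      exact Finset.sum_congr rfl fun k _ => by ring
    have h2 : v ⬝ᵥ S *ᵥ v = ∑ i, v i * ((S *ᵥ v) i) := rfl
    rw [h2]
    calc ∑ i, v i * ((S *ᵥ v) i)
        = ∑ i, (σ ^ 2 * (∑ k, β k * v k) * (β i * v i) + δ i ^ 2 * v i ^ 2) := by
          refine Finset.sum_congr rfl fun i _ => ?_
          rw [h1 i]; ring
      _ = σ ^ 2 * (∑ k, β k * v k) ^ 2 + ∑ k, δ k ^ 2 * v k ^ 2 := by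
          rw [Finset.sum_add_distrib, ← Finset.mul_sum]; ring
  set m : ℝ := ∑ k, β k * w k with hm
  set G : Fin p → ℝ := fun k => σ ^ 2 * m * β k + δ k ^ 2 * w k with hG
  -- KKT-type first order condition
  have kkt : ∀ i, 0 < w i → ∀ j, G i ≤ G j := by
    intro i hi j
    rcases eq_or_ne j i with rfl | hij
    · exact le_refl _
    by_contra hlt
    push_neg at hlt
    set A : ℝ := σ ^ 2 * (β j - β i) ^ 2 + δ j ^ 2 + δ i ^ 2 with hA
    have hApos : 0 < A := by
      have := hδ i; have := hδ j; positivity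
    set t : ℝ := min (w i) ((G i - G j) / A) with ht
    have ht0 : 0 < t := lt_min hi (div_pos (sub_pos.2 hlt) hApos)
    have hti : t ≤ w i := min_le_left _ _
    have htA : t * A ≤ G i - G j := (le_div_iff₀ hApos).mp (min_le_right _ _)
    set v : Fin p → ℝ := fun k => if k = j then w j + t else if k = i then w i - t else w k
      with hv
    have hvk : ∀ k, v k = w k + (if k = j then t else 0) + (if k = i then -t else 0) := by
      intro k
      rcases eq_or_ne k j with rfl | hkj
      · simp [hv, hij]
      · rcases eq_or_ne k i with rfl | hki
        · simp [hv, hkj, sub_eq_add_neg]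
        · simp [hv, hkj, hki]
    have hvsum : ∑ k, v k = 1 := by
      rw [Finset.sum_congr rfl fun k _ => hvk k]
      simp [Finset.sum_add_distrib, hwsum]
    have hvnn : ∀ k, 0 ≤ v k := by
      intro k
      rcases eq_or_ne k j with rfl | hkj
      · simp only [hv, if_pos rfl]
        have := hnn k; linarith
      · rcases eq_or_ne k i with rfl | hki
        · simp [hv, hkj]
          linarith
        · simp [hv, hkj, hki]
          exact hnn k
    have hβv : ∑ k, β k * v k = m + t * (β j - β i) := by
      have : ∀ k, β k * v k = β k * w k + (if k = j then t * β k else 0)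
          + (if k = i then -(t * β k) else 0) := by
        intro k
        rw [hvk k]
        rcases eq_or_ne k j with rfl | hkj
        · simp [if_neg hij]; ring
        · rcases eq_or_ne k i with rfl | hki
          · simp [if_neg hkj]; ring
          · simp [if_neg hkj, if_neg hki]
      rw [Finset.sum_congr rfl fun k _ => this k]
      simp [Finset.sum_add_distrib, ← hm]
      ring
    have hδv : ∑ k, δ k ^ 2 * v k ^ 2
        = (∑ k, δ k ^ 2 * w k ^ 2)
          + (2 * t * (δ j ^ 2 * w j) + t ^ 2 * δ j ^ 2)
          + (-(2 * t * (δ i ^ 2 * w i)) + t ^ 2 * δ i ^ 2) := by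
      have : ∀ k, δ k ^ 2 * v k ^ 2 = δ k ^ 2 * w k ^ 2
          + (if k = j then 2 * t * (δ k ^ 2 * w k) + t ^ 2 * δ k ^ 2 else 0)
          + (if k = i then -(2 * t * (δ k ^ 2 * w k)) + t ^ 2 * δ k ^ 2 else 0) := by
        intro k
        rcases eq_or_ne k j with rfl | hkj
        · simp only [hv, ↓reduceIte, if_neg hij]
          ring
        · rcases eq_or_ne k i with rfl | hki
          · simp only [hv, ↓reduceIte, if_neg hkj]
            ring
          · simp only [hv, if_neg hkj, if_neg hki, add_zero]
      rw [Finset.sum_congr rfl fun k _ => this k]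
      simp [Finset.sum_add_distrib]
    have key := hmin v hvsum hvnn
    rw [hF w, hF v, hβv, hδv] at key
    have h2 : 0 ≤ 2 * t * (G j - G i) + t ^ 2 * A := by
      have hGj : G j = σ ^ 2 * m * β j + δ j ^ 2 * w j := rfl
      have hGi : G i = σ ^ 2 * m * β i + δ i ^ 2 * w i := rfl
      nlinarith [key]
    nlinarith [mul_le_mul_of_nonneg_left htA ht0.le, mul_pos ht0 (sub_pos.2 hlt)]
  -- K is nonempty
  obtain ⟨i0, hi0⟩ : ∃ i, 0 < w i := by
    by_contra h
    push_neg at h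
    have hz : ∀ i, w i = 0 := fun i => le_antisymm (h i) (hnn i)
    rw [Finset.sum_congr rfl fun i _ => hz i] at hwsum
    simp at hwsum
  set c : ℝ := G i0 with hc
  have hcK : ∀ i, 0 < w i → G i = c := fun i hi => le_antisymm (kkt i hi i0) (kkt i0 hi0 i)
  have hw0 : ∀ i, i ∉ K → w i = 0 := by
    intro i hi
    rw [hKdef, Finset.mem_filter] at hi
    push_neg at hi
    exact le_antisymm (hi (Finset.mem_univ i)) (hnn i)
  have hcN : ∀ i, i ∉ K → c ≤ σ ^ 2 * m * β i := by
    intro i hi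
    have h := kkt i0 hi0 i
    have : G i = σ ^ 2 * m * β i := by
      simp only [hG]
      rw [hw0 i hi]; ring
    rw [this] at h; exact h
  have hmemK : ∀ i, i ∈ K ↔ 0 < w i := by
    intro i; rw [hKdef, Finset.mem_filter]
    simp
  set D : ℝ := ∑ j ∈ K, 1 / δ j ^ 2 with hD
  set E : ℝ := ∑ j ∈ K, β j ^ 2 / δ j ^ 2 with hE
  have hBKdef : BK = 1 / σ ^ 2 + E := rfl
  have hCKdef : CK = ∑ j ∈ K, β j / δ j ^ 2 := rfl
  have hKne : K.Nonempty := ⟨i0, (hmemK i0).2 hi0⟩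
  have hDpos : 0 < D := Finset.sum_pos (fun i _ => by have := hδ2 i; positivity) hKne
  have hwK : ∀ i ∈ K, w i = (c - σ ^ 2 * m * β i) / δ i ^ 2 := by
    intro i hi
    have hGi := hcK i ((hmemK i).1 hi)
    rw [eq_div_iff (ne_of_gt (hδ2 i))]
    simp only [hG] at hGi
    linarith [hGi]
  have hsumK : ∑ i ∈ K, w i = 1 := by
    rw [← hwsum]
    exact Finset.sum_subset (Finset.subset_univ K) (fun i _ hi => hw0 i hi)
  have hmKsum : ∑ i ∈ K, β i * w i = m := by
    rw [hm]
    exact Finset.sum_subset (Finset.subset_univ K)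
      (fun i _ hi => by rw [hw0 i hi]; ring)
  have h1 : 1 = c * D - σ ^ 2 * m * CK := by
    rw [← hsumK, hD, hCKdef, Finset.mul_sum, Finset.mul_sum, ← Finset.sum_sub_distrib]
    refine Finset.sum_congr rfl fun i hi => ?_
    rw [hwK i hi]
    have := (hδ2 i).ne'
    field_simp
  have h2 : m = c * CK - σ ^ 2 * m * E := by
    calc m = ∑ i ∈ K, β i * w i := hmKsum.symm
      _ = c * CK - σ ^ 2 * m * E := by
          rw [hCKdef, hE, Finset.mul_sum, Finset.mul_sum, ← Finset.sum_sub_distrib]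
          refine Finset.sum_congr rfl fun i hi => ?_
          rw [hwK i hi]
          have := (hδ2 i).ne'
          field_simp
  have hcC : c * CK = σ ^ 2 * m * BK := by
    rw [hBKdef]
    have hσ0 : σ ^ 2 ≠ 0 := ne_of_gt hσ2
    field_simp
    nlinarith [h2]
  have hCS : CK ^ 2 ≤ D * E := by
    have h := Finset.sum_mul_sq_le_sq_mul_sq K (fun j => 1 / δ j) (fun j => β j / δ j)
    have e1 : ∑ j ∈ K, (1 / δ j) * (β j / δ j) = CK := by
      rw [hCKdef]
      exact Finset.sum_congr rfl fun j _ => by ring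
    have e2 : ∑ j ∈ K, (1 / δ j) ^ 2 = D := by
      rw [hD]
      exact Finset.sum_congr rfl fun j _ => by ring
    have e3 : ∑ j ∈ K, (β j / δ j) ^ 2 = E := by
      rw [hE]
      exact Finset.sum_congr rfl fun j _ => by ring
    rw [e1, e2, e3] at h
    exact h
  have hBD : 0 < BK * D - CK ^ 2 := by
    rw [hBKdef]
    have h4 : D / σ ^ 2 > 0 := div_pos hDpos hσ2
    have h5 : (1 / σ ^ 2 + E) * D = D / σ ^ 2 + E * D := by ring
    linarith [hCS]
  have hCeq : CK = σ ^ 2 * m * (BK * D - CK ^ 2) := by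
    linear_combination CK * h1 + D * hcC
  have hmpos : 0 < m := by
    rcases lt_trichotomy m 0 with hneg | hzero | hpos
    · exfalso
      have hCneg : CK < 0 := by
        rw [hCeq]
        have : σ ^ 2 * m < 0 := mul_neg_of_pos_of_neg hσ2 hneg
        exact mul_neg_of_neg_of_pos this hBD
      have hcpos : 0 < c := by
        have : c * D = 1 + σ ^ 2 * m * CK := by linarith [h1]
        have h3 : 0 < σ ^ 2 * m * CK := by
          have : σ ^ 2 * m < 0 := mul_neg_of_pos_of_neg hσ2 hneg
          exact mul_pos_of_neg_of_neg this hCneg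
        nlinarith [hDpos]
      have hoff : ∀ i ∈ Finset.univ.filter (fun i => ¬ (0 < w i)), β i / δ i ^ 2 ≤ 0 := by
        intro i hi
        rw [Finset.mem_filter] at hi
        have hiK : i ∉ K := by
          rw [hKdef, Finset.mem_filter]; tauto
        have := hcN i hiK
        have hβneg : β i < 0 := by nlinarith [mul_pos hσ2 (neg_pos.2 hneg)]
        have := hδ2 i
        exact le_of_lt (div_neg_of_neg_of_pos hβneg this)
      have hsplit : CK + ∑ i ∈ Finset.univ.filter (fun i => ¬ (0 < w i)), β i / δ i ^ 2
          = ∑ j, β j / δ j ^ 2 := by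
        rw [hCKdef, hKdef]
        exact Finset.sum_filter_add_sum_filter_not _ _ _
      have hle : ∑ i ∈ Finset.univ.filter (fun i => ¬ (0 < w i)), β i / δ i ^ 2 ≤ 0 :=
        Finset.sum_nonpos hoff
      linarith [hsum]
    · exfalso
      have hC0 : CK = 0 := by rw [hCeq, hzero]; ring
      have hcpos : 0 < c := by
        have : c * D = 1 := by rw [h1, hC0]; ring
        nlinarith [hDpos]
      have hall : ∀ i, i ∈ K := by
        intro i
        by_contra hiK
        have := hcN i hiK
        rw [hzero] at this
        simp at this
        linarith
      have : K = Finset.univ := Finset.eq_univ_iff_forall.2 hall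
      rw [hCKdef, this] at hC0
      linarith [hsum, hC0 ▸ hsum]
    · exact hpos
  have hCpos : 0 < CK := by
    rw [hCeq]
    exact mul_pos (mul_pos hσ2 hmpos) hBD
  have hσm : 0 < σ ^ 2 * m := mul_pos hσ2 hmpos
  intro i
  constructor
  · intro hi
    have hGi := hcK i hi
    simp only [hG] at hGi
    have hclt : σ ^ 2 * m * β i < c := by nlinarith [mul_pos (hδ2 i) hi]
    have hgt : 0 < (c - σ ^ 2 * m * β i) * CK := mul_pos (by linarith) hCpos
    have heq : (c - σ ^ 2 * m * β i) * CK = σ ^ 2 * m * (BK - β i * CK) := by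
      linear_combination hcC
    nlinarith [heq, hgt]
  · intro hBC
    by_contra hni
    have hwi0 : w i = 0 := le_antisymm (not_lt.mp hni) (hnn i)
    have hiK : i ∉ K := by
      rw [hKdef, Finset.mem_filter]
      simp [hwi0]
    have hcle := hcN i hiK
    have hge : 0 ≤ (σ ^ 2 * m * β i - c) * CK := mul_nonneg (by linarith) hCpos.le
    have heq : (σ ^ 2 * m * β i - c) * CK = σ ^ 2 * m * (β i * CK - BK) := by
      linear_combination -hcC
    nlinarith [heq, hge]
end

section
/- In the setting of the one-factor long-only minimum variance problem with active set K, the quantity C_K = Σ_{j∈K} β_j/δ_j² is nonzero. -/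
/-!
At a minimiser `w` of `x ↦ xᵀ S x` on the simplex, the gradient satisfies `(S w)_j ≥ λ := wᵀ S w`
for every `j`, with equality on the active set `K`. For the one-factor matrix,
`(S w)_i = σ² m β_i + δ_i² w_i` with `m = βᵀ w`; solving for `w_i` on `K` and summing `β_i w_i`
gives `m (1 + σ² Σ_K β_i²/δ_i²) = λ C_K`. So `C_K = 0` forces `m = 0`, hence `λ = δ_i² w_i > 0`
on `K`, whereas an index `j ∉ K` (one exists, since `C_K = 0 ≠ C`) has `(S w)_j = 0 < λ`.
-/

open Matrix Finset

lemma nonneg_of_forall_mul_add_sq_mul_nonneg {a b : ℝ}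
    (h : ∀ t : ℝ, 0 < t → t ≤ 1 → 0 ≤ t * a + t ^ 2 * b) : 0 ≤ a := by
  by_contra! ha
  set t := min 1 (-a / (|b| + 1))
  have hb : 0 < |b| + 1 := by positivity
  have ht : 0 < t := lt_min one_pos (div_pos (neg_pos.2 ha) hb)
  have htb : t * (|b| + 1) ≤ -a := (le_div_iff₀ hb).1 (min_le_right _ _)
  have hlin : a + t * |b| < 0 := by nlinarith
  have hquad : t ^ 2 * b ≤ t ^ 2 * |b| := mul_le_mul_of_nonneg_left (le_abs_self b) (sq_nonneg t)
  nlinarith [h t ht (min_le_left _ _)]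

namespace Matrix

variable {ι : Type*}

lemma isSymm_smul_vecMulVec_add_diagonal [DecidableEq ι] (c : ℝ) (β d : ι → ℝ) :
    (c • vecMulVec β β + diagonal d).IsSymm :=
  (IsSymm.smul (transpose_vecMulVec β β) c).add (isSymm_diagonal d)

variable [Fintype ι]

lemma IsSymm.dotProduct_mulVec_comm {S : Matrix ι ι ℝ} (hS : S.IsSymm) (u v : ι → ℝ) :
    u ⬝ᵥ S *ᵥ v = v ⬝ᵥ S *ᵥ u := by
  rw [dotProduct_mulVec, dotProduct_comm, ← vecMul_transpose, hS.eq]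

lemma IsSymm.quadForm_add_smul {S : Matrix ι ι ℝ} (hS : S.IsSymm) (w u : ι → ℝ) (t : ℝ) :
    (w + t • u) ⬝ᵥ S *ᵥ (w + t • u)
      = w ⬝ᵥ S *ᵥ w + 2 * t * (u ⬝ᵥ S *ᵥ w) + t ^ 2 * (u ⬝ᵥ S *ᵥ u) := by
  simp only [mulVec_add, mulVec_smul, add_dotProduct, dotProduct_add, smul_dotProduct,
    dotProduct_smul, smul_eq_mul, hS.dotProduct_mulVec_comm w u]
  ring

lemma IsSymm.quadForm_le_of_isMinOn {S : Matrix ι ι ℝ} (hS : S.IsSymm) {s : Set (ι → ℝ)}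
    (hs : Convex ℝ s) {w v : ι → ℝ} (hw : w ∈ s) (hv : v ∈ s)
    (hmin : IsMinOn (fun x => x ⬝ᵥ S *ᵥ x) s w) :
    w ⬝ᵥ S *ᵥ w ≤ v ⬝ᵥ S *ᵥ w := by
  suffices 0 ≤ 2 * ((v - w) ⬝ᵥ S *ᵥ w) by
    rw [sub_dotProduct] at this; linarith
  refine nonneg_of_forall_mul_add_sq_mul_nonneg (b := (v - w) ⬝ᵥ S *ᵥ (v - w)) fun t ht0 ht1 => ?_
  have hmem : w + t • (v - w) ∈ s := hs.add_smul_sub_mem hw hv ⟨ht0.le, ht1⟩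
  have := isMinOn_iff.1 hmin _ hmem
  simp only [hS.quadForm_add_smul] at this
  linarith

lemma IsSymm.quadForm_le_mulVec_apply_of_isMinOn_stdSimplex [DecidableEq ι] {S : Matrix ι ι ℝ}
    (hS : S.IsSymm) {w : ι → ℝ} (hw : w ∈ stdSimplex ℝ ι)
    (hmin : IsMinOn (fun x => x ⬝ᵥ S *ᵥ x) (stdSimplex ℝ ι) w) (j : ι) :
    w ⬝ᵥ S *ᵥ w ≤ (S *ᵥ w) j := by
  simpa [single_dotProduct] using
    hS.quadForm_le_of_isMinOn (convex_stdSimplex ℝ ι) hw (single_mem_stdSimplex ℝ j) hmin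

lemma IsSymm.mulVec_apply_eq_quadForm_of_isMinOn_stdSimplex [DecidableEq ι] {S : Matrix ι ι ℝ}
    (hS : S.IsSymm) {w : ι → ℝ} (hw : w ∈ stdSimplex ℝ ι)
    (hmin : IsMinOn (fun x => x ⬝ᵥ S *ᵥ x) (stdSimplex ℝ ι) w) {i : ι} (hi : 0 < w i) :
    (S *ᵥ w) i = w ⬝ᵥ S *ᵥ w := by
  set q := w ⬝ᵥ S *ᵥ w
  have hgap : ∀ k, 0 ≤ w k * ((S *ᵥ w) k - q) := fun k =>
    mul_nonneg (hw.1 k) (sub_nonneg.2 (hS.quadForm_le_mulVec_apply_of_isMinOn_stdSimplex hw hmin k))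
  -- the gaps, weighted by `w`, sum to `q - q * ∑ k, w k = 0`
  have hsum : ∑ k, w k * ((S *ᵥ w) k - q) = 0 := by
    simp only [mul_sub, sum_sub_distrib, ← sum_mul, hw.2, one_mul]
    exact sub_self q
  have := (sum_eq_zero_iff_of_nonneg fun k _ => hgap k).1 hsum i (mem_univ i)
  rcases mul_eq_zero.1 this with h | h
  · exact absurd h hi.ne'
  · exact sub_eq_zero.1 h

lemma smul_vecMulVec_add_diagonal_mulVec_apply [DecidableEq ι] (c : ℝ) (β d v : ι → ℝ) (i : ι) :
    ((c • vecMulVec β β + diagonal d) *ᵥ v) i = c * (β ⬝ᵥ v) * β i + d i * v i := by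
  simp [add_mulVec, smul_mulVec, vecMulVec_mulVec, mulVec_diagonal, dotProduct_comm β, mul_assoc]

end Matrix

lemma dotProduct_eq_zero_of_sum_filter_pos_div_sq_eq_zero {ι : Type*} [Fintype ι]
    {β δ w : ι → ℝ} {c q : ℝ} (hc : 0 ≤ c) (hδ : ∀ i, δ i ≠ 0) (hw : ∀ i, 0 ≤ w i)
    (hact : ∀ i, 0 < w i → c * (β ⬝ᵥ w) * β i + δ i ^ 2 * w i = q)
    (hC : ∑ j ∈ univ.filter (fun i => 0 < w i), β j / δ j ^ 2 = 0) :
    β ⬝ᵥ w = 0 := by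
  set K := univ.filter (fun i => 0 < w i)
  set m := β ⬝ᵥ w
  have hmK : m = ∑ i ∈ K, β i * w i :=
    (sum_filter_of_ne fun i _ hi => (hw i).lt_of_ne fun h => hi (by rw [← h, mul_zero])).symm
  have hterm : ∀ i ∈ K, β i * w i = q * (β i / δ i ^ 2) - c * m * (β i ^ 2 / δ i ^ 2) := by
    intro i hi
    have := hact i (mem_filter.1 hi).2
    field_simp [hδ i]
    linear_combination β i * this
  have hQ : 0 ≤ c * ∑ i ∈ K, β i ^ 2 / δ i ^ 2 := mul_nonneg hc (sum_nonneg fun i _ => by positivity)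
  have hm : m * (1 + c * ∑ i ∈ K, β i ^ 2 / δ i ^ 2) = 0 := by
    rw [sum_congr rfl hterm, sum_sub_distrib, ← mul_sum, ← mul_sum, hC] at hmK
    linear_combination hmK
  exact (mul_eq_zero.1 hm).resolve_right (by linarith)

theorem stmt8_general {p : ℕ} (β δ : Fin p → ℝ) (σ : ℝ)
    (hδ : ∀ i, 0 < δ i)
    (hsum : (∑ j, β j / (δ j) ^ 2) ≠ 0)
    (S : Matrix (Fin p) (Fin p) ℝ)
    (hSdef : S = σ ^ 2 • (Matrix.of fun i j => β i * β j)
      + Matrix.diagonal (fun i => (δ i) ^ 2))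
    (w : Fin p → ℝ) (hwsum : ∑ i, w i = 1) (hnn : ∀ i, 0 ≤ w i)
    (hmin : ∀ v : Fin p → ℝ, (∑ i, v i = 1) → (∀ i, 0 ≤ v i) →
      w ⬝ᵥ S *ᵥ w ≤ v ⬝ᵥ S *ᵥ v) :
    (∑ j ∈ Finset.univ.filter (fun i => 0 < w i), β j / (δ j) ^ 2) ≠ 0 := by
  replace hSdef : S = σ ^ 2 • vecMulVec β β + diagonal (fun i => δ i ^ 2) := hSdef
  have hS : S.IsSymm := hSdef ▸ isSymm_smul_vecMulVec_add_diagonal _ _ _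
  have hSw (i) : (S *ᵥ w) i = σ ^ 2 * (β ⬝ᵥ w) * β i + δ i ^ 2 * w i :=
    hSdef ▸ smul_vecMulVec_add_diagonal_mulVec_apply _ _ _ _ _
  have hw : w ∈ stdSimplex ℝ (Fin p) := ⟨hnn, hwsum⟩
  have hwmin : IsMinOn (fun x => x ⬝ᵥ S *ᵥ x) (stdSimplex ℝ (Fin p)) w :=
    isMinOn_iff.2 fun v hv => hmin v hv.2 hv.1
  intro hC
  have hm : β ⬝ᵥ w = 0 := dotProduct_eq_zero_of_sum_filter_pos_div_sq_eq_zero (sq_nonneg σ)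
    (fun i => (hδ i).ne') hnn (fun i hi => (hSw i).symm.trans
      (hS.mulVec_apply_eq_quadForm_of_isMinOn_stdSimplex hw hwmin hi)) hC
  obtain ⟨i, hi⟩ : ∃ i, 0 < w i := by
    by_contra! h
    linarith [sum_nonpos fun i (_ : i ∈ univ) => h i]
  obtain ⟨j, hj⟩ : ∃ j, w j = 0 := by
    by_contra! h
    exact hsum (by rwa [filter_true_of_mem fun k _ => (hnn k).lt_of_ne' (h k)] at hC)
  have hqi := hS.mulVec_apply_eq_quadForm_of_isMinOn_stdSimplex hw hwmin hi
  have hqj := hS.quadForm_le_mulVec_apply_of_isMinOn_stdSimplex hw hwmin j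
  rw [hSw, hm] at hqi hqj
  rw [hj] at hqj
  nlinarith [mul_pos (pow_pos (hδ i) 2) hi]

theorem stmt8 {p : ℕ} (β δ : Fin p → ℝ) (σ : ℝ)
    (hδ : ∀ i, 0 < δ i) (hσ : 0 < σ)
    (hsum : (∑ j, β j / (δ j) ^ 2) ≠ 0)
    (S : Matrix (Fin p) (Fin p) ℝ)
    (hSdef : S = σ ^ 2 • (Matrix.of fun i j => β i * β j)
      + Matrix.diagonal (fun i => (δ i) ^ 2))
    (w : Fin p → ℝ) (hwsum : ∑ i, w i = 1) (hnn : ∀ i, 0 ≤ w i)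
    (hmin : ∀ v : Fin p → ℝ, (∑ i, v i = 1) → (∀ i, 0 ≤ v i) →
      w ⬝ᵥ S *ᵥ w ≤ v ⬝ᵥ S *ᵥ v) :
    (∑ j ∈ Finset.univ.filter (fun i => 0 < w i), β j / (δ j) ^ 2) ≠ 0 :=
  stmt8_general β δ σ hδ hsum S hSdef w hwsum hnn hmin
end

section
/- Under a one-factor model Σ = σ²ββᵀ + Δ with β nondecreasing and Σ_j β_j/δ_j² > 0, the number k of active assets in the long-only minimum variance portfolio equals max{i ≤ p : R_i > 0}, where R₁ = 1/σ² and R_i = 1/σ² + Σ_{j=1}^{i-1}(β_j/δ_j²)(β_j − β_i), and the active set is {1,…,k}. -/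
/-!
A minimizer `w` of `vᵀΣv` on the simplex satisfies the KKT conditions: `(Σw)_j` is at least the
optimal value `L > 0` for every `j`, with equality on the support of `w`. For `Σ = σ²ββᵀ + Δ` and
`s = βᵀw` they say `δ_j² w_j = d_j⁺` with `d_j = L - σ²sβ_j`. If `s ≤ 0`, then
`s = ∑ (β_j/δ_j²) d_j⁺ ≥ L ∑ β_j/δ_j² > 0`; hence `s > 0`, `d` is antitone and the support
`{d_j > 0}` is an initial segment. Finally `σ²s R_i = ∑ (β_j/δ_j²) (d_j⁺ - (d_j - d_i)⁺)`, and
since `β_j` has the sign of `L - d_j`, comparing term by term with `s = ∑ (β_j/δ_j²) d_j⁺` gives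
`Lσ²s R_i ≥ min L d_i · s > 0` if `d_i > 0` and `Lσ²s R_i ≤ d_i s ≤ 0` otherwise.
-/

open Matrix Finset

lemma nonneg_of_mul_add_mul_sq_nonneg {b c ε : ℝ} (hε : 0 < ε)
    (h : ∀ t, 0 < t → t ≤ ε → 0 ≤ b * t + c * t ^ 2) : 0 ≤ b := by
  by_contra! hb
  set t := min ε (-b / (|c| + 1))
  have ht : 0 < t := lt_min hε (div_pos (neg_pos.2 hb) (by positivity))
  have hct : (|c| + 1) * t ≤ -b := (le_div_iff₀' (by positivity)).1 (min_le_right _ _)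
  nlinarith [h t ht (min_le_left _ _), mul_le_mul_of_nonneg_right (le_abs_self c) ht.le]

section SimplexMinimizer

variable {ι : Type*} [Fintype ι]

lemma dotProduct_mulVec_add_smul {S : Matrix ι ι ℝ} (hS : S.IsSymm) (w e : ι → ℝ) (t : ℝ) :
    (w + t • e) ⬝ᵥ S *ᵥ (w + t • e)
      = w ⬝ᵥ S *ᵥ w + 2 * t * (e ⬝ᵥ S *ᵥ w) + t ^ 2 * (e ⬝ᵥ S *ᵥ e) := by
  have hsymm : w ⬝ᵥ S *ᵥ e = e ⬝ᵥ S *ᵥ w := by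
    rw [dotProduct_mulVec, ← mulVec_transpose, hS.eq, dotProduct_comm]
  simp only [mulVec_add, mulVec_smul, add_dotProduct, dotProduct_add, smul_dotProduct,
    dotProduct_smul, smul_eq_mul, hsymm]
  ring

variable [DecidableEq ι] {S : Matrix ι ι ℝ} {w : ι → ℝ}

lemma mulVec_apply_le_of_isMinOn_stdSimplex (hS : S.IsSymm) (hw₀ : w ∈ stdSimplex ℝ ι)
    (hw : IsMinOn (fun v ↦ v ⬝ᵥ S *ᵥ v) (stdSimplex ℝ ι) w) {i : ι} (hi : 0 < w i) (j : ι) :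
    (S *ᵥ w) i ≤ (S *ᵥ w) j := by
  set e : ι → ℝ := Pi.single j 1 - Pi.single i 1
  have he : ∀ t, 0 ≤ t → t ≤ w i → w + t • e ∈ stdSimplex ℝ ι := by
    intro t ht₀ ht
    refine ⟨fun m ↦ ?_, ?_⟩
    · have := hw₀.1 m
      simp only [e, Pi.add_apply, Pi.smul_apply, Pi.sub_apply, Pi.single_apply, smul_eq_mul]
      split_ifs with hj hi' <;> subst_vars <;> linarith
    · simp [e, sum_add_distrib, ← mul_sum, hw₀.2]
  have hslope : 0 ≤ 2 * (e ⬝ᵥ S *ᵥ w) := by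
    refine nonneg_of_mul_add_mul_sq_nonneg (c := e ⬝ᵥ S *ᵥ e) hi fun t ht htw ↦ ?_
    have := isMinOn_iff.1 hw _ (he t ht.le htw)
    rw [dotProduct_mulVec_add_smul hS] at this
    linarith
  simpa [e, sub_dotProduct, single_dotProduct] using hslope

lemma dotProduct_mulVec_le_of_isMinOn_stdSimplex (hS : S.IsSymm) (hw₀ : w ∈ stdSimplex ℝ ι)
    (hw : IsMinOn (fun v ↦ v ⬝ᵥ S *ᵥ v) (stdSimplex ℝ ι) w) (j : ι) :
    w ⬝ᵥ S *ᵥ w ≤ (S *ᵥ w) j :=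
  calc w ⬝ᵥ S *ᵥ w = ∑ i, w i * (S *ᵥ w) i := rfl
    _ ≤ ∑ i, w i * (S *ᵥ w) j := sum_le_sum fun i _ ↦ by
        rcases (hw₀.1 i).lt_or_eq with hi | hi
        · exact mul_le_mul_of_nonneg_left
            (mulVec_apply_le_of_isMinOn_stdSimplex hS hw₀ hw hi j) hi.le
        · simp [← hi]
    _ = (S *ᵥ w) j := by rw [← sum_mul, hw₀.2, one_mul]

lemma mulVec_apply_eq_of_isMinOn_stdSimplex (hS : S.IsSymm) (hw₀ : w ∈ stdSimplex ℝ ι)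
    (hw : IsMinOn (fun v ↦ v ⬝ᵥ S *ᵥ v) (stdSimplex ℝ ι) w) {i : ι} (hi : 0 < w i) :
    (S *ᵥ w) i = w ⬝ᵥ S *ᵥ w := by
  refine le_antisymm ?_ (dotProduct_mulVec_le_of_isMinOn_stdSimplex hS hw₀ hw i)
  calc (S *ᵥ w) i = ∑ j, w j * (S *ᵥ w) i := by rw [← sum_mul, hw₀.2, one_mul]
    _ ≤ ∑ j, w j * (S *ᵥ w) j := sum_le_sum fun j _ ↦
        mul_le_mul_of_nonneg_left (mulVec_apply_le_of_isMinOn_stdSimplex hS hw₀ hw hi j)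
          (hw₀.1 j)
    _ = w ⬝ᵥ S *ᵥ w := rfl

end SimplexMinimizer

lemma Fin.lt_card_filter_iff_of_antitone {n : ℕ} {P : Fin n → Prop} [DecidablePred P]
    (hP : Antitone P) (i : Fin n) : (i : ℕ) < #(univ.filter P) ↔ P i := by
  constructor
  · intro hi
    by_contra h
    have hsub : univ.filter P ⊆ Iio i := fun j hj ↦
      mem_Iio.2 (lt_of_not_ge fun hij ↦ h (hP hij (mem_filter.1 hj).2))
    have := card_le_card hsub
    rw [Fin.card_Iio] at this
    omega
  · intro h
    have hsub : Iic i ⊆ univ.filter P := fun j hj ↦ mem_filter.2 ⟨mem_univ j, hP (mem_Iic.1 hj) h⟩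
    have := card_le_card hsub
    rw [Fin.card_Iic] at this
    omega

lemma le_mul_max_sub_mul {L c b : ℝ} (hL : 0 ≤ L) (hc : c ≤ 0) : L * b ≤ b * max (L - c * b) 0 := by
  rcases le_total 0 b with hb | hb
  · nlinarith [le_max_left (L - c * b) 0, mul_nonpos_of_nonpos_of_nonneg hc hb]
  · have : max (L - c * b) 0 ≤ L := max_le (by nlinarith) hL
    nlinarith

/- The termwise comparisons of the last step, for `x = d_j` and `y = d_i`; `L - x` has the sign
of `β_j`. -/
lemma sub_mul_sub_max_nonneg {L x y : ℝ} (hL : 0 ≤ L) (hy : 0 < y) :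
    0 ≤ (L - x) * (L * (max x 0 - max (x - y) 0) - min L y * max x 0) := by
  rcases le_total x 0 with hx | hx
  · simp [max_eq_right hx, max_eq_right (by linarith : x - y ≤ 0)]
  rcases le_total x y with hxy | hxy <;> rcases le_total L y with hLy | hLy
  · simp [max_eq_left hx, max_eq_right (sub_nonpos.2 hxy), min_eq_left hLy]
  · simp only [max_eq_left hx, max_eq_right (sub_nonpos.2 hxy), min_eq_right hLy]
    nlinarith [mul_nonneg (mul_nonneg (sub_nonneg.2 (hxy.trans hLy)) (sub_nonneg.2 hLy)) hx]
  · simp only [max_eq_left hx, max_eq_left (sub_nonneg.2 hxy), min_eq_left hLy]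
    nlinarith [mul_nonneg (mul_nonneg hL (sub_nonneg.2 (hLy.trans hxy))) (sub_nonneg.2 hxy)]
  · simp only [max_eq_left hx, max_eq_left (sub_nonneg.2 hxy), min_eq_right hLy]
    nlinarith [mul_nonneg hy.le (sq_nonneg (L - x))]

lemma sub_mul_sub_max_nonpos {L x y : ℝ} (hL : 0 ≤ L) (hy : y ≤ 0) :
    (L - x) * (L * (max x 0 - max (x - y) 0) - y * max x 0) ≤ 0 := by
  rcases le_total x y with hxy | hxy
  · simp [max_eq_right (hxy.trans hy), max_eq_right (sub_nonpos.2 hxy)]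
  rcases le_total x 0 with hx | hx
  · simp only [max_eq_right hx, max_eq_left (sub_nonneg.2 hxy)]
    nlinarith [mul_nonneg (mul_nonneg (by linarith : 0 ≤ L - x) hL) (sub_nonneg.2 hxy)]
  · simp only [max_eq_left hx, max_eq_left (sub_nonneg.2 hxy)]
    nlinarith [mul_nonpos_of_nonpos_of_nonneg hy (sq_nonneg (L - x))]

lemma sum_Iio_mul_sub_eq_neg_sum_mul_max {ι : Type*} [Fintype ι] [LinearOrder ι]
    [LocallyFiniteOrderBot ι] {β : ι → ℝ} (hβ : Monotone β) (b : ι → ℝ) (i : ι) :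
    ∑ j ∈ Iio i, b j * (β j - β i) = -∑ j, b j * max (β i - β j) 0 := by
  rw [← sum_subset (subset_univ (Iio i)), ← sum_neg_distrib]
  · refine sum_congr rfl fun j hj ↦ ?_
    rw [max_eq_left (sub_nonneg.2 (hβ (mem_Iio.1 hj).le))]
    ring
  · intro j _ hj
    rw [max_eq_right (sub_nonpos.2 (hβ (not_lt.1 (mem_Iio.not.1 hj))))]
    simp

section OneFactor

variable {ι : Type*} [DecidableEq ι] (σ : ℝ) (β δ : ι → ℝ)

def oneFactorCov : Matrix ι ι ℝ :=
  σ ^ 2 • (Matrix.of fun i j ↦ β i * β j) + diagonal fun i ↦ δ i ^ 2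

lemma oneFactorCov_isSymm : (oneFactorCov σ β δ).IsSymm :=
  ((IsSymm.ext fun _ _ ↦ mul_comm _ _).smul _).add (isSymm_diagonal _)

variable [Fintype ι]

lemma oneFactorCov_mulVec_apply (v : ι → ℝ) (i : ι) :
    (oneFactorCov σ β δ *ᵥ v) i = σ ^ 2 * (β ⬝ᵥ v) * β i + δ i ^ 2 * v i := by
  change ((σ ^ 2 • vecMulVec β β + diagonal fun i ↦ δ i ^ 2) *ᵥ v) i = _
  simp [add_mulVec, smul_mulVec, vecMulVec_mulVec, mulVec_diagonal]
  ring

variable {σ β δ}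

lemma oneFactorCov_quadForm_pos (hδ : ∀ i, 0 < δ i) {v : ι → ℝ} (hv : v ≠ 0) :
    0 < v ⬝ᵥ oneFactorCov σ β δ *ᵥ v := by
  have hexpand : v ⬝ᵥ oneFactorCov σ β δ *ᵥ v
      = σ ^ 2 * (β ⬝ᵥ v) ^ 2 + ∑ i, δ i ^ 2 * v i ^ 2 := by
    simp only [dotProduct, oneFactorCov_mulVec_apply, mul_add, sum_add_distrib]
    congr 1
    · simp only [mul_comm (v _), mul_assoc, ← mul_sum]
      ring
    · exact sum_congr rfl fun i _ ↦ by ring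
  obtain ⟨i, hi⟩ := Function.ne_iff.1 hv
  have : 0 < ∑ i, δ i ^ 2 * v i ^ 2 := sum_pos' (fun j _ ↦ by positivity)
    ⟨i, mem_univ i, mul_pos (pow_pos (hδ i) 2) (sq_pos_of_ne_zero hi)⟩
  rw [hexpand]
  positivity

end OneFactor

section OneFactorSolution

variable {ι : Type*} [Fintype ι] {σ L : ℝ} {β δ w : ι → ℝ}

lemma oneFactor_sq_mul_minimizer_eq_max [DecidableEq ι] (hδ : ∀ i, 0 < δ i)
    (hw₀ : w ∈ stdSimplex ℝ ι)
    (hw : IsMinOn (fun v ↦ v ⬝ᵥ oneFactorCov σ β δ *ᵥ v) (stdSimplex ℝ ι) w) (j : ι) :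
    δ j ^ 2 * w j = max (w ⬝ᵥ oneFactorCov σ β δ *ᵥ w - σ ^ 2 * (β ⬝ᵥ w) * β j) 0 := by
  have hS := oneFactorCov_isSymm σ β δ
  have hle := dotProduct_mulVec_le_of_isMinOn_stdSimplex hS hw₀ hw j
  rw [oneFactorCov_mulVec_apply] at hle
  rcases (hw₀.1 j).lt_or_eq with hj | hj
  · have heq := mulVec_apply_eq_of_isMinOn_stdSimplex hS hw₀ hw hj
    rw [oneFactorCov_mulVec_apply] at heq
    rw [max_eq_left (by nlinarith [mul_pos (pow_pos (hδ j) 2) hj])]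
    linarith
  · rw [← hj] at hle ⊢
    rw [max_eq_right (by linarith)]
    ring

lemma oneFactor_portfolioBeta_eq (hδ : ∀ i, δ i ≠ 0)
    (hw : ∀ j, δ j ^ 2 * w j = max (L - σ ^ 2 * (β ⬝ᵥ w) * β j) 0) :
    β ⬝ᵥ w = ∑ j, β j / δ j ^ 2 * max (L - σ ^ 2 * (β ⬝ᵥ w) * β j) 0 :=
  sum_congr rfl fun j _ ↦ by
    have := hδ j
    rw [← hw j]
    field_simp

lemma oneFactor_portfolioBeta_pos (hδ : ∀ i, δ i ≠ 0) (hL : 0 < L)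
    (hsum : 0 < ∑ j, β j / δ j ^ 2)
    (hw : ∀ j, δ j ^ 2 * w j = max (L - σ ^ 2 * (β ⬝ᵥ w) * β j) 0) : 0 < β ⬝ᵥ w := by
  by_contra! hs
  have hc : σ ^ 2 * (β ⬝ᵥ w) ≤ 0 := mul_nonpos_of_nonneg_of_nonpos (sq_nonneg σ) hs
  have hlow : L * ∑ j, β j / δ j ^ 2 ≤ β ⬝ᵥ w := by
    rw [mul_sum, oneFactor_portfolioBeta_eq hδ hw]
    refine sum_le_sum fun j _ ↦ ?_
    rw [mul_div_assoc', div_mul_eq_mul_div]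
    exact div_le_div_of_nonneg_right (le_mul_max_sub_mul hL.le hc) (sq_nonneg _)
  nlinarith [mul_pos hL hsum]

variable [LinearOrder ι] [LocallyFiniteOrderBot ι]

lemma oneFactor_mul_threshold_eq (hβ : Monotone β) (hδ : ∀ i, δ i ≠ 0) (hσ : σ ≠ 0)
    (hw : ∀ j, δ j ^ 2 * w j = max (L - σ ^ 2 * (β ⬝ᵥ w) * β j) 0) (hs : 0 ≤ β ⬝ᵥ w) (i : ι) :
    σ ^ 2 * (β ⬝ᵥ w) * (1 / σ ^ 2 + ∑ j ∈ Iio i, β j / δ j ^ 2 * (β j - β i)) =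
      ∑ j, β j / δ j ^ 2 * (max (L - σ ^ 2 * (β ⬝ᵥ w) * β j) 0 -
        max (σ ^ 2 * (β ⬝ᵥ w) * (β i - β j)) 0) := by
  have hc : 0 ≤ σ ^ 2 * (β ⬝ᵥ w) := by positivity
  rw [mul_add, mul_one_div, mul_div_cancel_left₀ _ (by positivity),
    sum_Iio_mul_sub_eq_neg_sum_mul_max hβ, mul_neg, ← sub_eq_add_neg, mul_sum,
    sub_eq_iff_eq_add, ← sum_add_distrib]
  refine (oneFactor_portfolioBeta_eq hδ hw).trans (sum_congr rfl fun j _ ↦ ?_)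
  rw [mul_left_comm, mul_max_of_nonneg _ _ hc, mul_zero]
  ring

lemma oneFactor_threshold_pos_iff (hβ : Monotone β) (hδ : ∀ i, 0 < δ i) (hσ : 0 < σ)
    (hL : 0 < L) (hw : ∀ j, δ j ^ 2 * w j = max (L - σ ^ 2 * (β ⬝ᵥ w) * β j) 0)
    (hs : 0 < β ⬝ᵥ w) (i : ι) :
    0 < 1 / σ ^ 2 + ∑ j ∈ Iio i, β j / δ j ^ 2 * (β j - β i) ↔
      0 < L - σ ^ 2 * (β ⬝ᵥ w) * β i := by
  have hδ₀ : ∀ i, δ i ≠ 0 := fun i ↦ (hδ i).ne'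
  have hR := oneFactor_mul_threshold_eq hβ hδ₀ hσ.ne' hw hs.le i
  have hs_eq := oneFactor_portfolioBeta_eq hδ₀ hw
  set s := β ⬝ᵥ w
  set c := σ ^ 2 * s
  have hc : 0 < c := by positivity
  set d : ι → ℝ := fun j ↦ L - c * β j with hd
  set R := 1 / σ ^ 2 + ∑ j ∈ Iio i, β j / δ j ^ 2 * (β j - β i)
  have hkey : ∀ m, L * (c * R) - m * s = ∑ j, (L - d j) *
      (L * (max (d j) 0 - max (d j - d i) 0) - m * max (d j) 0) / (c * δ j ^ 2) := by
    intro m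
    rw [hR, hs_eq, mul_sum, mul_sum, ← sum_sub_distrib]
    refine sum_congr rfl fun j _ ↦ ?_
    have := hδ₀ j
    simp only [hd, sub_sub_cancel, sub_sub_sub_cancel_left]
    field_simp
  rcases lt_or_ge 0 (d i) with hdi | hdi
  · refine iff_of_true ?_ hdi
    have hlow : 0 ≤ L * (c * R) - min L (d i) * s := by
      rw [hkey]
      exact sum_nonneg fun j _ ↦
        div_nonneg (sub_mul_sub_max_nonneg hL.le hdi) (by have := hδ j; positivity)
    have hpos : 0 < min L (d i) * s := mul_pos (lt_min hL hdi) hs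
    rw [← mul_assoc] at hlow
    exact pos_of_mul_pos_right (by linarith) (mul_pos hL hc).le
  · refine iff_of_false (fun hRpos ↦ ?_) hdi.not_gt
    have hup : L * (c * R) - d i * s ≤ 0 := by
      rw [hkey]
      exact sum_nonpos fun j _ ↦ div_nonpos_of_nonpos_of_nonneg
        (sub_mul_sub_max_nonpos hL.le hdi) (by have := hδ j; positivity)
    nlinarith [mul_pos (mul_pos hL hc) hRpos, mul_nonpos_of_nonpos_of_nonneg hdi hs.le]

end OneFactorSolution

theorem stmt12 {p : ℕ} (β δ : Fin p → ℝ) (σ : ℝ)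
    (hβ : Monotone β) (hδ : ∀ i, 0 < δ i) (hσ : 0 < σ)
    (hsum : 0 < ∑ j, β j / (δ j) ^ 2)
    (S : Matrix (Fin p) (Fin p) ℝ)
    (hSdef : S = σ ^ 2 • (Matrix.of fun i j => β i * β j)
      + Matrix.diagonal (fun i => (δ i) ^ 2))
    (w : Fin p → ℝ) (hwsum : ∑ i, w i = 1) (hnn : ∀ i, 0 ≤ w i)
    (hmin : ∀ v : Fin p → ℝ, (∑ i, v i = 1) → (∀ i, 0 ≤ v i) →
      w ⬝ᵥ S *ᵥ w ≤ v ⬝ᵥ S *ᵥ v) :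
    let R : Fin p → ℝ := fun i =>
      1 / σ ^ 2 + ∑ j ∈ Finset.Iio i, (β j / (δ j) ^ 2) * (β j - β i)
    let k : ℕ := (Finset.univ.filter (fun i => 0 < w i)).card
    (∀ i : Fin p, 0 < w i ↔ (i : ℕ) < k) ∧
    (∀ i : Fin p, 0 < R i ↔ (i : ℕ) < k) := by
  intro R k
  replace hSdef : S = oneFactorCov σ β δ := hSdef
  subst hSdef
  have hw₀ : w ∈ stdSimplex ℝ (Fin p) := ⟨hnn, hwsum⟩
  have hwmin : IsMinOn (fun v ↦ v ⬝ᵥ oneFactorCov σ β δ *ᵥ v) (stdSimplex ℝ (Fin p)) w :=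
    isMinOn_iff.2 fun v hv ↦ hmin v hv.2 hv.1
  set L := w ⬝ᵥ oneFactorCov σ β δ *ᵥ w
  have hL : 0 < L := oneFactorCov_quadForm_pos hδ fun h ↦ by simp [h] at hwsum
  have hw := oneFactor_sq_mul_minimizer_eq_max hδ hw₀ hwmin
  have hs := oneFactor_portfolioBeta_pos (fun i ↦ (hδ i).ne') hL hsum hw
  have hsupp : ∀ i, 0 < w i ↔ 0 < L - σ ^ 2 * (β ⬝ᵥ w) * β i := fun i ↦ by
    rw [← mul_pos_iff_of_pos_left (pow_pos (hδ i) 2), hw i, lt_max_iff, lt_self_iff_false,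
      or_false]
  have hanti : Antitone fun i ↦ 0 < w i := fun i j hij hj ↦ (hsupp i).2 <|
    ((hsupp j).1 hj).trans_le <|
      sub_le_sub_left (mul_le_mul_of_nonneg_left (hβ hij) (by positivity)) L
  have hk : ∀ i : Fin p, 0 < w i ↔ (i : ℕ) < k := fun i ↦
    (Fin.lt_card_filter_iff_of_antitone hanti i).symm
  exact ⟨hk, fun i ↦ (oneFactor_threshold_pos_iff hβ hδ hσ hL hw hs i).trans
    ((hsupp i).symm.trans (hk i))⟩
end
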